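/- Let M be a binary matrix with species set S and character set C. Then M admits a persistent perfect phylogeny if and only if the General Character Compatibility instance on species S and characters C, in which each character c is the generalized character α_c with α_c(s) = {1} if M[s,c]=1 and α_c(s) = {0,2} if M[s,c]=0, and every character tree is the directed path 0 → 1 → 2, admits a solution. -/

import Mathlib

/-! Common definitions for persistent perfect phylogeny formalizations. -/

/-- `AncRel parent i j` : node `i` is an ancestor (or equal to) node `j`
in the rooted tree given by the parent function. -/
def AncRel (parent : ℕ → ℕ) (i j : ℕ) : Prop := ∃ k : ℕ, parent^[k] j = i

/-- A persistent perfect phylogeny (p-pp) for the binary matrix `M`.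
Nodes are `0, …, n-1`, the root is `0`, and each non-root node `i` has
parent `parent i < i`; the (unique) edge entering `i` is identified with `i`. -/
structure PPTree (S C : Type*) (M : S → C → Bool) where
  n : ℕ
  n_pos : 0 < n
  parent : ℕ → ℕ
  parent_lt : ∀ i, 0 < i → i < n → parent i < i
  label : ℕ → C → Bool
  root_label : ∀ c, label 0 c = false
  /-- for each character there are at most two edges across which its state changes -/
  changes_le_two : ∀ c : C, ∀ i j k : ℕ,
    (0 < i ∧ i < n ∧ label (parent i) c ≠ label i c) →
    (0 < j ∧ j < n ∧ label (parent j) c ≠ label j c) →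
    (0 < k ∧ k < n ∧ label (parent k) c ≠ label k c) →
    i = j ∨ i = k ∨ j = k
  /-- two change edges of the same character lie on one root-to-leaf path,
  the higher one being the gain `c⁺` (0→1) and the lower one the loss `c⁻` (1→0) -/
  changes_on_path : ∀ c : C, ∀ i j : ℕ,
    (0 < i ∧ i < n ∧ label (parent i) c ≠ label i c) →
    (0 < j ∧ j < n ∧ label (parent j) c ≠ label j c) →
    i ≠ j →
    (AncRel parent i j ∧ label (parent i) c = false ∧ label i c = true ∧
      label (parent j) c = true ∧ label j c = false) ∨
    (AncRel parent j i ∧ label (parent j) c = false ∧ label j c = true ∧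
      label (parent i) c = true ∧ label i c = false)
  /-- if a character changes on exactly one edge, the change is a gain (0→1) -/
  single_change_gain : ∀ c : C, ∀ i : ℕ,
    (0 < i ∧ i < n ∧ label (parent i) c ≠ label i c) →
    (∀ j : ℕ, (0 < j ∧ j < n ∧ label (parent j) c ≠ label j c) → j = i) →
    (label (parent i) c = false ∧ label i c = true)
  /-- each row of `M` labels exactly one node of the tree -/
  rows_label : ∀ s : S, ∃! x : ℕ, x < n ∧ ∀ c, label x c = M s c

/-- Character `c` is persistent in the node `x`: the path from the root to `x`
contains both an edge labeled `c⁺` and an edge labeled `c⁻`. -/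
def PPTree.persistentAt {S C : Type*} {M : S → C → Bool} (T : PPTree S C M)
    (x : ℕ) (c : C) : Prop :=
  (∃ i, 0 < i ∧ i < T.n ∧ AncRel T.parent i x ∧
    T.label (T.parent i) c = false ∧ T.label i c = true) ∧
  (∃ j, 0 < j ∧ j < T.n ∧ AncRel T.parent j x ∧
    T.label (T.parent j) c = true ∧ T.label j c = false)

/-- A p-pp tree is consistent with the constraint set `E` if, for every
`(s,c) ∈ E`, the character `c` is not persistent in the species `s`. -/
def PPTree.consistent {S C : Type*} {M : S → C → Bool} (T : PPTree S C M)
    (E : Set (S × C)) : Prop :=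
  ∀ p ∈ E, ∀ x : ℕ, x < T.n → (∀ c, T.label x c = M p.1 c) →
    ¬ T.persistentAt x p.2

/-- Two (distinct) characters are in conflict when all four configurations
`(0,0), (0,1), (1,0), (1,1)` occur among the species. -/
def Conflicting {S C : Type*} (M : S → C → Bool) (c₁ c₂ : C) : Prop :=
  c₁ ≠ c₂ ∧
  (∃ s, M s c₁ = false ∧ M s c₂ = false) ∧
  (∃ s, M s c₁ = false ∧ M s c₂ = true) ∧
  (∃ s, M s c₁ = true ∧ M s c₂ = false) ∧
  (∃ s, M s c₁ = true ∧ M s c₂ = true)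

/-- The conflict graph of `M` is empty: no two characters are in conflict. -/
def EmptyConflictGraph {S C : Type*} (M : S → C → Bool) : Prop :=
  ∀ c₁ c₂ : C, ¬ Conflicting M c₁ c₂

/-- The column of a character, as a set of species. -/
def ColSet {S C : Type*} (M : S → C → Bool) (c : C) : Set S := {s | M s c = true}

/-- Column `c⁺` of the completion of the extended matrix of `(M,E)` determined by
the choice function `f` (the pair `(?,?)` of species `s` and character `c` is
completed to `(1,1)` iff `f s c` holds). -/
def ColPlus {S C : Type*} (M : S → C → Bool) (E : Set (S × C))
    (f : S → C → Prop) (c : C) : Set S :=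
  {s | M s c = true ∨ ((s, c) ∉ E ∧ M s c = false ∧ f s c)}

/-- Column `c⁻` of the completion of the extended matrix of `(M,E)` determined by `f`. -/
def ColMinus {S C : Type*} (M : S → C → Bool) (E : Set (S × C))
    (f : S → C → Prop) (c : C) : Set S :=
  {s | (s, c) ∉ E ∧ M s c = false ∧ f s c}

/-- The column of a signed character (`(c, true)` is `c⁺`, `(c, false)` is `c⁻`). -/
def ColOf {S C : Type*} (M : S → C → Bool) (E : Set (S × C))
    (f : S → C → Prop) : C × Bool → Set S :=
  fun p => if p.2 then ColPlus M E f p.1 else ColMinus M E f p.1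

/-- Two sets are laminar: disjoint or one contains the other. -/
def LaminarPair {S : Type*} (X Y : Set S) : Prop := X ∩ Y = ∅ ∨ X ⊆ Y ∨ Y ⊆ X

/-- The completion of the extended matrix of `(M,E)` given by `f` has pairwise
laminar columns, i.e. it admits a rooted (directed) perfect phylogeny. -/
def LaminarCompletion {S C : Type*} (M : S → C → Bool) (E : Set (S × C))
    (f : S → C → Prop) : Prop :=
  ∀ p q : C × Bool, LaminarPair (ColOf M E f p) (ColOf M E f q)

/-- The state of a character in a red-black graph. -/
inductive CharState : Type
  | inactive : CharState
  | active : CharState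
  | free : CharState
deriving DecidableEq

/-- A red-black graph: an edge-bicolored bipartite graph on species and
characters, together with a state for each character and a set of forbidden
(species, character) pairs. -/
structure RBGraph (S C : Type*) where
  black : S → C → Prop
  red : S → C → Prop
  charState : C → CharState
  forbidden : Set (S × C)

/-- The underlying simple graph of a red-black graph (edges of either color). -/
def RBGraph.graph {S C : Type*} (G : RBGraph S C) : SimpleGraph (S ⊕ C) where
  Adj v w :=
    (∃ s c, v = Sum.inl s ∧ w = Sum.inr c ∧ (G.black s c ∨ G.red s c)) ∨
    (∃ s c, w = Sum.inl s ∧ v = Sum.inr c ∧ (G.black s c ∨ G.red s c))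
  symm := ⟨fun v w h => Or.symm h⟩
  loopless := by
    exact ⟨by rintro v (⟨s, c, h₁, h₂, -⟩ | ⟨s, c, h₁, h₂, -⟩) <;> subst h₁ <;> simp at h₂⟩

/-- The subgraph of a red-black graph formed by the red edges only. -/
def RBGraph.redGraph {S C : Type*} (G : RBGraph S C) : SimpleGraph (S ⊕ C) where
  Adj v w :=
    (∃ s c, v = Sum.inl s ∧ w = Sum.inr c ∧ G.red s c) ∨
    (∃ s c, w = Sum.inl s ∧ v = Sum.inr c ∧ G.red s c)
  symm := ⟨fun v w h => Or.symm h⟩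
  loopless := by
    exact ⟨by rintro v (⟨s, c, h₁, h₂, -⟩ | ⟨s, c, h₁, h₂, -⟩) <;> subst h₁ <;> simp at h₂⟩

/-- The species `s` belongs to the connected component `𝒞(c)` of character `c`. -/
def RBGraph.reach {S C : Type*} (G : RBGraph S C) (c : C) (s : S) : Prop :=
  G.graph.Reachable (Sum.inr c) (Sum.inl s)

/-- The realization of character `c` is possible in `G`. -/
def RealizePossible {S C : Type*} (G : RBGraph S C) (c : C) : Prop :=
  match G.charState c with
  | CharState.inactive => ∀ s, G.reach c s → (s, c) ∉ G.forbidden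
  | CharState.active => ∀ s, G.reach c s → G.red s c
  | CharState.free => False

/-- The realization of character `c` in the red-black graph `G`.
If `c` is inactive: add a red edge `{s,c}` for every species `s ∈ 𝒞(c)` not
adjacent to `c`, delete all black edges incident to `c`, forbid `(s,c)` for all
`s ∉ 𝒞(c)`, and make `c` active.  If `c` is active: delete all red edges
incident to `c` and make `c` free. -/
def realize {S C : Type*} [DecidableEq C] (G : RBGraph S C) (c : C) : RBGraph S C :=
  match G.charState c with
  | CharState.inactive =>
    { black := fun s c' => G.black s c' ∧ c' ≠ c
      red := fun s c' =>
        if c' = c then G.red s c ∨ (G.reach c s ∧ ¬ G.black s c ∧ ¬ G.red s c)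
        else G.red s c'
      charState := fun c' => if c' = c then CharState.active else G.charState c'
      forbidden := G.forbidden ∪ {p | p.2 = c ∧ ¬ G.reach c p.1} }
  | CharState.active =>
    { black := G.black
      red := fun s c' => G.red s c' ∧ c' ≠ c
      charState := fun c' => if c' = c then CharState.free else G.charState c'
      forbidden := G.forbidden }
  | CharState.free => G

/-- Realize a sequence of characters, in order. -/
def realizeList {S C : Type*} [DecidableEq C] (G : RBGraph S C) : List C → RBGraph S C
  | [] => G
  | c :: l => realizeList (realize G c) l

/-- All realizations of the sequence, performed in order, are possible. -/
def AllPossible {S C : Type*} [DecidableEq C] (G : RBGraph S C) : List C → Prop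
  | [] => True
  | c :: l => RealizePossible G c ∧ AllPossible (realize G c) l

/-- The initial red-black graph of the constrained matrix `(M, E)`:
a black edge `{s,c}` iff `M s c = 1`, all characters inactive, forbidden set `E`. -/
def initRB {S C : Type*} (M : S → C → Bool) (E : Set (S × C)) : RBGraph S C :=
  { black := fun s c => M s c = true
    red := fun _ _ => False
    charState := fun _ => CharState.inactive
    forbidden := E }

/-- The red-black graph has no edges at all. -/
def Edgeless {S C : Type*} (G : RBGraph S C) : Prop :=
  ∀ (s : S) (c : C), ¬ G.black s c ∧ ¬ G.red s c

/-- A proper sequence of signed characters: each signed character occurs at most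
once, and `c⁻` occurs only after the corresponding `c⁺`. -/
def ProperSigned {C : Type*} [DecidableEq C] (R : List (C × Bool)) : Prop :=
  (∀ σ : C × Bool, R.count σ ≤ 1) ∧
  (∀ c : C, (c, false) ∈ R →
    ∃ i j : Fin R.length, (i : ℕ) < (j : ℕ) ∧ R.get i = (c, true) ∧ R.get j = (c, false))

/-- A successful c-reduction of the red-black graph of `(M, E)`: a proper signed
sequence containing `c⁺` for every character, all of whose realizations are
possible in order, and whose final red-black graph has no edges. -/
def SuccessfulCReduction {S C : Type*} [DecidableEq C] (M : S → C → Bool)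
    (E : Set (S × C)) (R : List (C × Bool)) : Prop :=
  ProperSigned R ∧ (∀ c : C, (c, true) ∈ R) ∧
  AllPossible (initRB M E) (R.map Prod.fst) ∧
  Edgeless (realizeList (initRB M E) (R.map Prod.fst))

/-- The canonical completion of the extended matrix of `(M,E)` associated with a
successful c-reduction `R`: at the first realization of each character `c`, the
pair of species `s` and character `c` is completed to `(1,1)` iff `s ∈ 𝒞(c)` at
that moment. -/
def canonComp {S C : Type*} [DecidableEq C] (M : S → C → Bool) (E : Set (S × C))
    (R : List (C × Bool)) : S → C → Prop :=
  fun s c =>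
    (realizeList (initRB M E)
      ((R.takeWhile (fun p => decide (p ≠ (c, true)))).map Prod.fst)).reach c s

/-- `L` is a label sequence of node `x` of the p-pp tree `T`: it lists, without
repetition and in root-to-`x` order, exactly the signed characters labeling the
edges on the path from the root to `x` (`(c, true)` stands for `c⁺`,
`(c, false)` for `c⁻`). -/
def IsLabelSeq {S C : Type*} {M : S → C → Bool} (T : PPTree S C M) (x : ℕ)
    (L : List (C × Bool)) : Prop :=
  L.Nodup ∧
  (∀ σ : C × Bool, σ ∈ L ↔ ∃ i, 0 < i ∧ i < T.n ∧ AncRel T.parent i x ∧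
    T.label (T.parent i) σ.1 = (!σ.2) ∧ T.label i σ.1 = σ.2) ∧
  (∀ p q : Fin L.length, (p : ℕ) < (q : ℕ) → ∀ i j : ℕ,
    (0 < i ∧ i < T.n ∧ AncRel T.parent i x ∧
      T.label (T.parent i) (L.get p).1 = (!(L.get p).2) ∧
      T.label i (L.get p).1 = (L.get p).2) →
    (0 < j ∧ j < T.n ∧ AncRel T.parent j x ∧
      T.label (T.parent j) (L.get q).1 = (!(L.get q).2) ∧
      T.label j (L.get q).1 = (L.get q).2) →
    AncRel T.parent i j)

/-- A solution of a General Character Compatibility instance (with all character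
trees equal to the directed path `0 → 1 → 2`). -/
structure GCCSolution (S C : Type*) (α : C → S → Set (Fin 3)) where
  n : ℕ
  n_pos : 0 < n
  parent : ℕ → ℕ
  parent_lt : ∀ i, 0 < i → i < n → parent i < i
  st : ℕ → C → Fin 3
  /-- every species has a node whose states belong to the prescribed sets -/
  species_node : ∀ s : S, ∃ v : ℕ, v < n ∧ ∀ c : C, st v c ∈ α c s
  /-- for each character and state, the nodes carrying that state induce a
  connected subtree: any two of them are joined by a path inside the set,
  through a common ancestor carrying the same state -/
  state_connected : ∀ (c : C) (q : Fin 3) (u v : ℕ), u < n → v < n →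
    st u c = q → st v c = q →
    ∃ r : ℕ, r < n ∧ st r c = q ∧ AncRel parent r u ∧ AncRel parent r v ∧
      (∀ w : ℕ, AncRel parent r w → AncRel parent w u → st w c = q) ∧
      (∀ w : ℕ, AncRel parent r w → AncRel parent w v → st w c = q)
  /-- along each edge a state is unchanged or moves one step along `0 → 1 → 2` -/
  edge_ok : ∀ (c : C) (i : ℕ), 0 < i → i < n →
    st (parent i) c = st i c ∨
    (st (parent i) c = 0 ∧ st i c = 1) ∨
    (st (parent i) c = 1 ∧ st i c = 2)

/-!
Both sides meet in a p-pp whose rows may label several nodes: all that matters is that every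
character switches from `0` to `1` across at most one edge and from `1` to `0` across at most one
edge. In such a tree, the GCC state of a character at a node is the number of its switches on the
root path; that number is at most `2`, its parity is the label, so state `1` is exactly label `1`,
and the nodes of a given state hang below the edge of the corresponding switch.

Conversely, the nodes of state `q` in a GCC solution form a subtree with a single top node.
Labelling every node by "state `= 1`" below a fresh all-zero root, a switch to `1` can only occur
at the top of state `1` and a switch to `0` only at the top of state `2`. Rows are then made to
label single nodes by keeping the first node of every label vector and hanging each kept node
below the first node that carries its parent's label, which preserves all switches.
-/

namespace AncRel

variable {p : ℕ → ℕ} {a b c : ℕ}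

theorem refl (p : ℕ → ℕ) (v : ℕ) : AncRel p v v := ⟨0, rfl⟩

theorem parent_left (p : ℕ → ℕ) (v : ℕ) : AncRel p (p v) v := ⟨1, rfl⟩

theorem trans (hab : AncRel p a b) (hbc : AncRel p b c) : AncRel p a c := by
  obtain ⟨k, rfl⟩ := hab
  obtain ⟨l, rfl⟩ := hbc
  exact ⟨k + l, Function.iterate_add_apply p k l c⟩

theorem eq_or_of_parent (h : AncRel p a b) : a = b ∨ AncRel p a (p b) := by
  obtain ⟨_ | k, rfl⟩ := h
  · exact Or.inl rfl
  · exact Or.inr ⟨k, (Function.iterate_succ_apply p k b)⟩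

theorem monotone {α : Type*} [Preorder α] {f : ℕ → α} (hf : ∀ v, f (p v) ≤ f v)
    (h : AncRel p a b) : f a ≤ f b := by
  obtain ⟨k, rfl⟩ := h
  induction k with
  | zero => exact le_rfl
  | succ k ih => exact (Function.iterate_succ_apply' p k b ▸ hf _).trans ih

theorem le (hp0 : p 0 = 0) (hp : ∀ v, 0 < v → p v < v) (h : AncRel p a b) : a ≤ b := by
  refine h.monotone (f := id) fun v => ?_
  rcases Nat.eq_zero_or_pos v with rfl | hv
  exacts [hp0.le, (hp v hv).le]

theorem zero_left (hp : ∀ v, 0 < v → p v < v) (v : ℕ) : AncRel p 0 v := by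
  induction v using Nat.strong_induction_on with
  | _ v ih =>
    rcases Nat.eq_zero_or_pos v with rfl | hv
    · exact refl p 0
    · exact (ih _ (hp v hv)).trans (parent_left p v)

end AncRel

/-- A `PPTree` constrains its parent map only on `0 < v < n`; this one makes every node a
descendant of `0`. -/
def normParent (n : ℕ) (parent : ℕ → ℕ) (v : ℕ) : ℕ := if 0 < v ∧ v < n then parent v else 0

section normParent

variable {n : ℕ} {parent : ℕ → ℕ}

theorem normParent_zero : normParent n parent 0 = 0 := by simp [normParent]

theorem normParent_of_lt {v : ℕ} (h0 : 0 < v) (hv : v < n) : normParent n parent v = parent v :=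
  if_pos ⟨h0, hv⟩

theorem normParent_lt (hp : ∀ i, 0 < i → i < n → parent i < i) {v : ℕ} (h0 : 0 < v) :
    normParent n parent v < v := by
  unfold normParent
  split_ifs with h
  exacts [hp v h.1 h.2, h0]

end normParent

/-- The edge entering `i` is a gain `c⁺` (`b = true`) or a loss `c⁻` (`b = false`) of `g`. -/
def IsSwitch (p : ℕ → ℕ) (g : ℕ → Bool) (b : Bool) (i : ℕ) : Prop :=
  0 < i ∧ g (p i) = !b ∧ g i = b

theorem isSwitch_of_ne {p : ℕ → ℕ} {g : ℕ → Bool} {i : ℕ} (hi : 0 < i) (h : g (p i) ≠ g i) :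
    IsSwitch p g (g i) i :=
  ⟨hi, Bool.eq_not_iff.mpr h, rfl⟩

theorem exists_isSwitch_true_ancRel {n : ℕ} {p : ℕ → ℕ} (hp : ∀ v, 0 < v → v < n → p v < v)
    {g : ℕ → Bool} (hg0 : g 0 = false) {v : ℕ} (hv : v < n) (hgv : g v = true) :
    ∃ i ≤ v, IsSwitch p g true i ∧ AncRel p i v := by
  induction v using Nat.strong_induction_on with
  | _ v ih =>
    have hv0 : 0 < v := Nat.pos_of_ne_zero (by rintro rfl; simp [hg0] at hgv)
    by_cases hgp : g (p v) = true
    · obtain ⟨i, hiv, hi, hanc⟩ := ih _ (hp v hv0 hv) ((hp v hv0 hv).trans hv) hgp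
      exact ⟨i, hiv.trans (hp v hv0 hv).le, hi, hanc.trans (AncRel.parent_left p v)⟩
    · exact ⟨v, le_rfl, ⟨hv0, by simpa using hgp, hgv⟩, AncRel.refl p v⟩

def UniqueSwitches (n : ℕ) (p : ℕ → ℕ) (g : ℕ → Bool) : Prop :=
  ∀ (b : Bool) (i j : ℕ), i < n → j < n → IsSwitch p g b i → IsSwitch p g b j → i = j

section ofUniqueSwitches

variable {n : ℕ} {p : ℕ → ℕ} {g : ℕ → Bool}

theorem UniqueSwitches.eq_of_eq (h : UniqueSwitches n p g) {i j : ℕ}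
    (hi : 0 < i ∧ i < n ∧ g (p i) ≠ g i) (hj : 0 < j ∧ j < n ∧ g (p j) ≠ g j)
    (hij : g i = g j) : i = j := by
  refine h (g i) i j hi.2.1 hj.2.1 (isSwitch_of_ne hi.1 hi.2.2) ?_
  rw [hij]
  exact isSwitch_of_ne hj.1 hj.2.2

theorem UniqueSwitches.ancRel_of_gain_of_loss (h : UniqueSwitches n p g)
    (hp : ∀ v, 0 < v → v < n → p v < v) (hg0 : g 0 = false) {i j : ℕ}
    (hi : 0 < i ∧ i < n ∧ g (p i) ≠ g i) (hj : 0 < j ∧ j < n ∧ g (p j) ≠ g j)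
    (hgain : g i = true) (hloss : g j = false) :
    AncRel p i j ∧ g (p i) = false ∧ g i = true ∧ g (p j) = true ∧ g j = false := by
  have hpi : g (p i) = false := by simpa [hgain] using hi.2.2
  have hpj : g (p j) = true := by simpa [hloss] using hj.2.2
  have hpjn : p j < n := (hp j hj.1 hj.2.1).trans hj.2.1
  obtain ⟨k, hkj, hk, hanc⟩ := exists_isSwitch_true_ancRel hp hg0 hpjn hpj
  have hki : k = i :=
    h true k i (hkj.trans_lt hpjn) hi.2.1 hk (hgain ▸ isSwitch_of_ne hi.1 hi.2.2)
  exact ⟨hki ▸ hanc.trans (AncRel.parent_left p j), hpi, hgain, hpj, hloss⟩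

variable {S C : Type*} {M : S → C → Bool}

def PPTree.ofUniqueSwitches (n : ℕ) (n_pos : 0 < n) (parent : ℕ → ℕ)
    (parent_lt : ∀ i, 0 < i → i < n → parent i < i) (label : ℕ → C → Bool)
    (root_label : ∀ c, label 0 c = false) (unique : ∀ c, UniqueSwitches n parent (label · c))
    (rows_label : ∀ s, ∃! x, x < n ∧ ∀ c, label x c = M s c) : PPTree S C M where
  n := n
  n_pos := n_pos
  parent := parent
  parent_lt := parent_lt
  label := label
  root_label := root_label
  rows_label := rows_label
  changes_le_two c i j k hi hj hk := by
    have : label i c = label j c ∨ label i c = label k c ∨ label j c = label k c := by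
      cases label i c <;> cases label j c <;> cases label k c <;> simp
    rcases this with h | h | h
    · exact Or.inl ((unique c).eq_of_eq hi hj h)
    · exact Or.inr (Or.inl ((unique c).eq_of_eq hi hk h))
    · exact Or.inr (Or.inr ((unique c).eq_of_eq hj hk h))
  changes_on_path c i j hi hj hij := by
    have hne : label i c ≠ label j c := fun h => hij ((unique c).eq_of_eq hi hj h)
    rcases Bool.eq_false_or_eq_true (label i c) with hli | hli
    · exact Or.inl ((unique c).ancRel_of_gain_of_loss parent_lt (root_label c) hi hj hli
        (by simpa [hli] using hne.symm))
    · exact Or.inr ((unique c).ancRel_of_gain_of_loss parent_lt (root_label c) hj hi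
        (by simpa [hli] using hne.symm) hli)
  single_change_gain c i hi honly := by
    rcases Bool.eq_false_or_eq_true (label i c) with hli | hli
    · exact ⟨by simpa [hli] using hi.2.2, hli⟩
    · have hpi : label (parent i) c = true := by simpa [hli] using hi.2.2
      have hpin : parent i < n := (parent_lt i hi.1 hi.2.1).trans hi.2.1
      obtain ⟨g, hgi, ⟨hg0, hgp, hg⟩, -⟩ :=
        exists_isSwitch_true_ancRel (g := (label · c)) parent_lt (root_label c) hpin hpi
      have : g = i := honly g ⟨hg0, hgi.trans_lt hpin, by simp [hgp, hg]⟩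
      simp [this, hli] at hg

end ofUniqueSwitches

theorem Nat.nth_mem_of_lt_count {P : ℕ → Prop} [DecidablePred P] {n k : ℕ}
    (h : k < Nat.count P n) : P (Nat.nth P k) :=
  Nat.nth_mem k fun hf => h.trans_le (Nat.count_le_card hf n)

theorem Nat.count_nth_of_lt_count {P : ℕ → Prop} [DecidablePred P] {n k : ℕ}
    (h : k < Nat.count P n) : Nat.count P (Nat.nth P k) = k :=
  Nat.count_nth fun hf => h.trans_le (Nat.count_le_card hf n)

/-- A p-pp in which a row may label several nodes. -/
structure WeakPPTree (S C : Type*) (M : S → C → Bool) where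
  n : ℕ
  n_pos : 0 < n
  parent : ℕ → ℕ
  parent_zero : parent 0 = 0
  parent_lt : ∀ i, 0 < i → parent i < i
  label : ℕ → C → Bool
  root_label : ∀ c, label 0 c = false
  unique_switches : ∀ c, UniqueSwitches n parent (label · c)
  row_node : ∀ s, ∃ x < n, ∀ c, label x c = M s c

namespace WeakPPTree

variable {S C : Type*} {M : S → C → Bool} (W : WeakPPTree S C M)

open Classical in
noncomputable def firstNode (v : ℕ) : ℕ := Nat.find (⟨v, rfl⟩ : ∃ y, W.label y = W.label v)

theorem label_firstNode (v : ℕ) : W.label (W.firstNode v) = W.label v := by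
  classical exact Nat.find_spec (⟨v, rfl⟩ : ∃ y, W.label y = W.label v)

theorem firstNode_le (v : ℕ) : W.firstNode v ≤ v := by
  classical exact Nat.find_min' (⟨v, rfl⟩ : ∃ y, W.label y = W.label v) rfl

theorem firstNode_eq_of_label_eq {a b : ℕ} (h : W.label a = W.label b) :
    W.firstNode a = W.firstNode b := by
  classical
  apply le_antisymm
  · exact Nat.find_min' _ ((W.label_firstNode b).trans h.symm)
  · exact Nat.find_min' _ ((W.label_firstNode a).trans h)

abbrev IsFirst (v : ℕ) : Prop := W.firstNode v = v

theorem isFirst_firstNode (v : ℕ) : W.IsFirst (W.firstNode v) :=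
  W.firstNode_eq_of_label_eq (W.label_firstNode v)

/-- The kept nodes are the first nodes of their label vectors, renumbered increasingly; each one
hangs below the first node carrying its parent's label. -/
noncomputable def compressParent (x : ℕ) : ℕ :=
  Nat.count W.IsFirst (W.firstNode (W.parent (Nat.nth W.IsFirst x)))

noncomputable def compressLabel (x : ℕ) : C → Bool := W.label (Nat.nth W.IsFirst x)

theorem count_isFirst_pos : 0 < Nat.count W.IsFirst W.n :=
  Nat.count_zero W.IsFirst ▸
    Nat.count_strict_mono (Nat.le_zero.mp (W.firstNode_le 0)) W.n_pos

theorem nth_isFirst_pos {x : ℕ} (hx0 : 0 < x) (hx : x < Nat.count W.IsFirst W.n) :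
    0 < Nat.nth W.IsFirst x := by
  refine Nat.pos_of_ne_zero fun h => hx0.ne' ?_
  rw [← Nat.count_nth_of_lt_count hx, h, Nat.count_zero]

theorem compressLabel_compressParent (x : ℕ) :
    W.compressLabel (W.compressParent x) = W.label (W.parent (Nat.nth W.IsFirst x)) := by
  rw [compressLabel, compressParent, Nat.nth_count (W.isFirst_firstNode _), label_firstNode]

theorem compressParent_lt (x : ℕ) (hx0 : 0 < x) (hx : x < Nat.count W.IsFirst W.n) :
    W.compressParent x < x := by
  have hv0 := W.nth_isFirst_pos hx0 hx
  have hlt : W.firstNode (W.parent (Nat.nth W.IsFirst x)) < Nat.nth W.IsFirst x :=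
    (W.firstNode_le _).trans_lt (W.parent_lt _ hv0)
  simpa only [compressParent, Nat.count_nth_of_lt_count hx] using
    Nat.count_strict_mono (W.isFirst_firstNode _) hlt

theorem compressLabel_zero (c : C) : W.compressLabel 0 c = false := by
  rw [compressLabel, Nat.nth_zero_of_zero (p := W.IsFirst) (Nat.le_zero.mp (W.firstNode_le 0)),
    W.root_label]

theorem uniqueSwitches_compress (c : C) :
    UniqueSwitches (Nat.count W.IsFirst W.n) W.compressParent (W.compressLabel · c) := by
  have lift : ∀ {b x}, x < Nat.count W.IsFirst W.n →
      IsSwitch W.compressParent (W.compressLabel · c) b x →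
      IsSwitch W.parent (W.label · c) b (Nat.nth W.IsFirst x) := by
    rintro b x hx ⟨hx0, hpx, hxb⟩
    exact ⟨W.nth_isFirst_pos hx0 hx, by simpa [compressLabel_compressParent] using hpx, hxb⟩
  intro b x y hx hy hsx hsy
  have := W.unique_switches c b _ _ (Nat.nth_lt_of_lt_count hx) (Nat.nth_lt_of_lt_count hy)
    (lift hx hsx) (lift hy hsy)
  rw [← Nat.count_nth_of_lt_count hx, ← Nat.count_nth_of_lt_count hy, this]

theorem existsUnique_compressLabel_eq_row (s : S) :
    ∃! x, x < Nat.count W.IsFirst W.n ∧ ∀ c, W.compressLabel x c = M s c := by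
  obtain ⟨v, hv, hvs⟩ := W.row_node s
  refine ⟨Nat.count W.IsFirst (W.firstNode v), ⟨?_, ?_⟩, ?_⟩
  · exact Nat.count_strict_mono (W.isFirst_firstNode v) ((W.firstNode_le v).trans_lt hv)
  · simpa [compressLabel, Nat.nth_count (W.isFirst_firstNode v), label_firstNode] using hvs
  · rintro x ⟨hx, hxs⟩
    have hlabel : W.label (Nat.nth W.IsFirst x) = W.label v := funext fun c =>
      (hxs c).trans (hvs c).symm
    rw [← Nat.count_nth_of_lt_count hx, ← Nat.nth_mem_of_lt_count hx,
      W.firstNode_eq_of_label_eq hlabel]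

noncomputable def toPPTree : PPTree S C M :=
  .ofUniqueSwitches (Nat.count W.IsFirst W.n) W.count_isFirst_pos W.compressParent
    W.compressParent_lt W.compressLabel W.compressLabel_zero W.uniqueSwitches_compress
    W.existsUnique_compressLabel_eq_row

end WeakPPTree

namespace PPTree

variable {S C : Type*} {M : S → C → Bool} (T : PPTree S C M)

theorem uniqueSwitches_normParent (c : C) :
    UniqueSwitches T.n (normParent T.n T.parent) (T.label · c) := by
  rintro b i j hi hj ⟨hi0, hpi, hib⟩ ⟨hj0, hpj, hjb⟩
  simp only [normParent_of_lt hi0 hi, normParent_of_lt hj0 hj] at hpi hpj hib hjb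
  by_contra hij
  rcases T.changes_on_path c i j ⟨hi0, hi, by simp [hpi, hib]⟩ ⟨hj0, hj, by simp [hpj, hjb]⟩ hij
    with ⟨-, -, hgain, -, hloss⟩ | ⟨-, -, hgain, -, hloss⟩ <;> simp_all

def toWeakPPTree : WeakPPTree S C M where
  n := T.n
  n_pos := T.n_pos
  parent := normParent T.n T.parent
  parent_zero := normParent_zero
  parent_lt _ := normParent_lt T.parent_lt
  label := T.label
  root_label := T.root_label
  unique_switches := T.uniqueSwitches_normParent
  row_node s := (T.rows_label s).exists

end PPTree

def switchCount (p : ℕ → ℕ) (g : ℕ → Bool) (v : ℕ) : ℕ :=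
  if h : 0 < v ∧ p v < v then switchCount p g (p v) + if g (p v) = g v then 0 else 1 else 0
termination_by v
decreasing_by exact h.2

section switchCount

variable {p : ℕ → ℕ} {g : ℕ → Bool}

theorem switchCount_zero : switchCount p g 0 = 0 := by
  rw [switchCount, dif_neg (by simp)]

theorem switchCount_of_pos (hp : ∀ v, 0 < v → p v < v) {v : ℕ} (hv : 0 < v) :
    switchCount p g v = switchCount p g (p v) + if g (p v) = g v then 0 else 1 := by
  rw [switchCount, dif_pos ⟨hv, hp v hv⟩]

theorem AncRel.switchCount_le (hp0 : p 0 = 0) (hp : ∀ v, 0 < v → p v < v) {a b : ℕ}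
    (h : AncRel p a b) : switchCount p g a ≤ switchCount p g b := by
  refine h.monotone fun v => ?_
  rcases Nat.eq_zero_or_pos v with rfl | hv
  · rw [hp0]
  · rw [switchCount_of_pos hp hv]
    omega

theorem eq_true_iff_switchCount_mod_two (hp : ∀ v, 0 < v → p v < v) (hg0 : g 0 = false)
    (v : ℕ) : g v = true ↔ switchCount p g v % 2 = 1 := by
  induction v using Nat.strong_induction_on with
  | _ v ih =>
    rcases Nat.eq_zero_or_pos v with rfl | hv
    · simp [hg0, switchCount_zero]
    · have := ih (p v) (hp v hv)
      revert this
      rw [switchCount_of_pos hp hv]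
      cases g (p v) <;> cases g v <;> simp <;> omega

theorem exists_switchCount_eq (hp : ∀ v, 0 < v → p v < v) (v : ℕ) {t : ℕ} (ht : 0 < t)
    (htv : t ≤ switchCount p g v) :
    ∃ i, AncRel p i v ∧ 0 < i ∧ g (p i) ≠ g i ∧ switchCount p g i = t := by
  induction v using Nat.strong_induction_on with
  | _ v ih =>
    rcases Nat.eq_zero_or_pos v with rfl | hv
    · rw [switchCount_zero] at htv
      omega
    rw [switchCount_of_pos hp hv] at htv
    by_cases htp : t ≤ switchCount p g (p v)
    · obtain ⟨i, hiv, hi⟩ := ih (p v) (hp v hv) htp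
      exact ⟨i, hiv.trans (AncRel.parent_left p v), hi⟩
    · have hgv : g (p v) ≠ g v := fun h => by simp [h] at htv; omega
      refine ⟨v, AncRel.refl p v, hv, hgv, ?_⟩
      rw [switchCount_of_pos hp hv, if_neg hgv]
      simp only [hgv, if_false] at htv
      omega

variable {n : ℕ}

theorem UniqueSwitches.eq_of_switchCount_mod_two_eq (huniq : UniqueSwitches n p g)
    (hp : ∀ v, 0 < v → p v < v) (hg0 : g 0 = false) {i j : ℕ}
    (hi : 0 < i ∧ i < n ∧ g (p i) ≠ g i) (hj : 0 < j ∧ j < n ∧ g (p j) ≠ g j)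
    (h : switchCount p g i % 2 = switchCount p g j % 2) : i = j :=
  huniq.eq_of_eq hi hj <| by
    rw [Bool.eq_iff_iff, eq_true_iff_switchCount_mod_two hp hg0,
      eq_true_iff_switchCount_mod_two hp hg0, h]

theorem UniqueSwitches.switchCount_le_two (huniq : UniqueSwitches n p g) (hp0 : p 0 = 0)
    (hp : ∀ v, 0 < v → p v < v) (hg0 : g 0 = false) {v : ℕ} (hv : v < n) :
    switchCount p g v ≤ 2 := by
  by_contra! h
  obtain ⟨i, hiv, hi0, hgi, hi⟩ := exists_switchCount_eq (g := g) hp v one_pos (by omega)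
  obtain ⟨j, hjv, hj0, hgj, hj⟩ := exists_switchCount_eq hp v (show 0 < 3 by norm_num) h
  have := huniq.eq_of_switchCount_mod_two_eq hp hg0 ⟨hi0, (hiv.le hp0 hp).trans_lt hv, hgi⟩
    ⟨hj0, (hjv.le hp0 hp).trans_lt hv, hgj⟩ (by rw [hi, hj]; rfl)
  subst this
  omega

theorem UniqueSwitches.exists_ancRel_switchCount_eq (huniq : UniqueSwitches n p g)
    (hp0 : p 0 = 0) (hp : ∀ v, 0 < v → p v < v) (hg0 : g 0 = false)
    {u v : ℕ} (hu : u < n) (hv : v < n) (h : switchCount p g u = switchCount p g v) :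
    ∃ r, AncRel p r u ∧ AncRel p r v ∧ switchCount p g r = switchCount p g u := by
  rcases Nat.eq_zero_or_pos (switchCount p g u) with h0 | hpos
  · exact ⟨0, AncRel.zero_left hp u, AncRel.zero_left hp v, by rw [h0, switchCount_zero]⟩
  obtain ⟨i, hiu, hi0, hgi, hi⟩ := exists_switchCount_eq hp u hpos le_rfl
  obtain ⟨j, hjv, hj0, hgj, hj⟩ := exists_switchCount_eq hp v hpos h.le
  have := huniq.eq_of_switchCount_mod_two_eq hp hg0 ⟨hi0, (hiu.le hp0 hp).trans_lt hu, hgi⟩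
    ⟨hj0, (hjv.le hp0 hp).trans_lt hv, hgj⟩ (by rw [hi, hj])
  subst this
  exact ⟨i, hiu, hjv, hi⟩

end switchCount

def gccInstance {S C : Type*} (M : S → C → Bool) : C → S → Set (Fin 3) :=
  fun c s => {q | (M s c = true ∧ q = 1) ∨ (M s c = false ∧ (q = 0 ∨ q = 2))}

theorem mem_gccInstance {S C : Type*} {M : S → C → Bool} {c : C} {s : S} {q : Fin 3} :
    q ∈ gccInstance M c s ↔ (q = 1 ↔ M s c = true) := by
  cases h : M s c <;> fin_cases q <;> simp [gccInstance, h]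

namespace WeakPPTree

variable {S C : Type*} {M : S → C → Bool} (W : WeakPPTree S C M)

def state (v : ℕ) (c : C) : Fin 3 := Fin.ofNat 3 (switchCount W.parent (W.label · c) v)

theorem switchCount_le_two {v : ℕ} (hv : v < W.n) (c : C) :
    switchCount W.parent (W.label · c) v ≤ 2 :=
  (W.unique_switches c).switchCount_le_two W.parent_zero W.parent_lt (W.root_label c) hv

theorem val_state {v : ℕ} (hv : v < W.n) (c : C) :
    (W.state v c : ℕ) = switchCount W.parent (W.label · c) v := by
  rw [state, Fin.val_ofNat]
  exact Nat.mod_eq_of_lt (by have := W.switchCount_le_two hv c; omega)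

theorem state_mem_gccInstance {s : S} {x : ℕ} (hx : x < W.n) (hxs : ∀ c, W.label x c = M s c)
    (c : C) : W.state x c ∈ gccInstance M c s := by
  have h2 := W.switchCount_le_two hx c
  have hpar := eq_true_iff_switchCount_mod_two (g := (W.label · c)) W.parent_lt (W.root_label c) x
  rw [mem_gccInstance, ← hxs c, hpar, Fin.ext_iff, W.val_state hx, Fin.val_one]
  omega

theorem state_connected (c : C) (q : Fin 3) (u v : ℕ) (hu : u < W.n) (hv : v < W.n)
    (hsu : W.state u c = q) (hsv : W.state v c = q) :
    ∃ r : ℕ, r < W.n ∧ W.state r c = q ∧ AncRel W.parent r u ∧ AncRel W.parent r v ∧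
      (∀ w : ℕ, AncRel W.parent r w → AncRel W.parent w u → W.state w c = q) ∧
      (∀ w : ℕ, AncRel W.parent r w → AncRel W.parent w v → W.state w c = q) := by
  have hcount : switchCount W.parent (W.label · c) u = switchCount W.parent (W.label · c) v := by
    rw [← W.val_state hu, ← W.val_state hv, hsu, hsv]
  obtain ⟨r, hru, hrv, hr⟩ := (W.unique_switches c).exists_ancRel_switchCount_eq W.parent_zero
    W.parent_lt (W.root_label c) hu hv hcount
  have between : ∀ w t, AncRel W.parent r w → AncRel W.parent w t →
      switchCount W.parent (W.label · c) t = switchCount W.parent (W.label · c) r →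
      W.state w c = W.state r c := by
    intro w t hrw hwt ht
    have h1 := hrw.switchCount_le (g := (W.label · c)) W.parent_zero W.parent_lt
    have h2 := hwt.switchCount_le (g := (W.label · c)) W.parent_zero W.parent_lt
    simp only [state, le_antisymm (h2.trans ht.le) h1]
  have hsr : W.state r c = q := by rw [← hsu, state, state, hr]
  refine ⟨r, (hru.le W.parent_zero W.parent_lt).trans_lt hu, hsr, hru, hrv, ?_, ?_⟩
  · exact fun w hrw hwu => hsr ▸ between w u hrw hwu hr.symm
  · exact fun w hrw hwv => hsr ▸ between w v hrw hwv (hcount ▸ hr.symm)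

theorem state_edge (c : C) (i : ℕ) (hi0 : 0 < i) (hi : i < W.n) :
    W.state (W.parent i) c = W.state i c ∨
    (W.state (W.parent i) c = 0 ∧ W.state i c = 1) ∨
    (W.state (W.parent i) c = 1 ∧ W.state i c = 2) := by
  have hpi := (W.parent_lt i hi0).trans hi
  have h2 := W.switchCount_le_two hi c
  have hstep := switchCount_of_pos (g := (W.label · c)) W.parent_lt hi0
  simp only [Fin.ext_iff, W.val_state hi, W.val_state hpi, Fin.val_zero, Fin.val_one,
    Fin.val_two]
  split_ifs at hstep <;> omega

def toGCCSolution : GCCSolution S C (gccInstance M) where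
  n := W.n
  n_pos := W.n_pos
  parent := W.parent
  parent_lt i hi _ := W.parent_lt i hi
  st := W.state
  species_node s :=
    have ⟨x, hx, hxs⟩ := W.row_node s
    ⟨x, hx, W.state_mem_gccInstance hx hxs⟩
  state_connected := W.state_connected
  edge_ok := W.state_edge

end WeakPPTree

def addRoot (p : ℕ → ℕ) (v : ℕ) : ℕ := if 1 < v then p (v - 1) + 1 else 0

section addRoot

variable {p : ℕ → ℕ}

theorem addRoot_zero : addRoot p 0 = 0 := rfl

theorem addRoot_one : addRoot p 1 = 0 := rfl

theorem addRoot_succ {u : ℕ} (hu : 0 < u) : addRoot p (u + 1) = p u + 1 := by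
  simp [addRoot, hu]

theorem addRoot_lt (hp : ∀ v, 0 < v → p v < v) {v : ℕ} (hv : 0 < v) : addRoot p v < v := by
  unfold addRoot
  split_ifs with h
  · have := hp (v - 1) (by omega)
    omega
  · exact hv

end addRoot

namespace GCCSolution

variable {S C : Type*} {α : C → S → Set (Fin 3)} (G : GCCSolution S C α)

theorem st_parent_le (c : C) {i : ℕ} (hi0 : 0 < i) (hi : i < G.n) :
    G.st (G.parent i) c ≤ G.st i c := by
  rcases G.edge_ok c i hi0 hi with h | ⟨h1, h2⟩ | ⟨h1, h2⟩
  · exact h.le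
  · rw [h1, h2]; decide
  · rw [h1, h2]; decide

theorem st_zero_le (c : C) {v : ℕ} (hv : v < G.n) : G.st 0 c ≤ G.st v c := by
  induction v using Nat.strong_induction_on with
  | _ v ih =>
    rcases Nat.eq_zero_or_pos v with rfl | hv0
    · exact le_rfl
    · have hpv := G.parent_lt v hv0 hv
      exact (ih _ hpv (hpv.trans hv)).trans (G.st_parent_le c hv0 hv)

def IsStateRoot (c : C) (q : Fin 3) (u : ℕ) : Prop :=
  u < G.n ∧ G.st u c = q ∧ (u = 0 ∨ G.st (G.parent u) c ≠ q)

variable {G}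

theorem eq_of_ancRel_of_st_parent_ne {c : C} {q : Fin 3} {r u : ℕ} (hr : AncRel G.parent r u)
    (hclass : ∀ w, AncRel G.parent r w → AncRel G.parent w u → G.st w c = q)
    (hne : G.st (G.parent u) c ≠ q) : r = u :=
  hr.eq_or_of_parent.resolve_right fun h => hne (hclass _ h (AncRel.parent_left _ u))

theorem IsStateRoot.eq_of_pos {c : C} {q : Fin 3} {u v : ℕ} (hu : G.IsStateRoot c q u)
    (hv : G.IsStateRoot c q v) (hu0 : 0 < u) (hv0 : 0 < v) : u = v := by
  obtain ⟨r, -, -, hru, hrv, hclu, hclv⟩ := G.state_connected c q u v hu.1 hv.1 hu.2.1 hv.2.1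
  exact (eq_of_ancRel_of_st_parent_ne hru hclu (hu.2.2.resolve_left hu0.ne')).symm.trans
    (eq_of_ancRel_of_st_parent_ne hrv hclv (hv.2.2.resolve_left hv0.ne'))

theorem IsStateRoot.eq_zero {c : C} {q : Fin 3} {v : ℕ} (h0 : G.IsStateRoot c q 0)
    (hv : G.IsStateRoot c q v) : v = 0 := by
  by_contra hv0
  have hv0 := Nat.pos_of_ne_zero hv0
  have hpv := G.parent_lt v hv0 hv.1
  refine hv.2.2.resolve_left hv0.ne' (le_antisymm ?_ ?_)
  · exact hv.2.1 ▸ G.st_parent_le c hv0 hv.1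
  · exact h0.2.1 ▸ G.st_zero_le c (hpv.trans hv.1)

theorem IsStateRoot.unique {c : C} {q : Fin 3} {u v : ℕ} (hu : G.IsStateRoot c q u)
    (hv : G.IsStateRoot c q v) : u = v := by
  rcases Nat.eq_zero_or_pos u with rfl | hu0
  · exact (hu.eq_zero hv).symm
  rcases Nat.eq_zero_or_pos v with rfl | hv0
  · exact hv.eq_zero hu
  exact hu.eq_of_pos hv hu0 hv0

variable (G)

/-- Node `v + 1` carries the state-`1` indicator of node `v` of `G`; node `0` is a fresh root. -/
def shiftedLabel (v : ℕ) (c : C) : Bool := decide (0 < v ∧ G.st (v - 1) c = 1)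

theorem isStateRoot_of_isSwitch {c : C} {b : Bool} {u : ℕ} (hu : u < G.n)
    (h : IsSwitch (addRoot (normParent G.n G.parent)) (G.shiftedLabel · c) b (u + 1)) :
    G.IsStateRoot c (if b then 1 else 2) u := by
  obtain ⟨-, hpb, hb⟩ := h
  rcases Nat.eq_zero_or_pos u with rfl | hu0
  · simp only [zero_add, addRoot_one, shiftedLabel] at hpb hb
    cases b <;> simp_all [IsStateRoot]
  · simp only [addRoot_succ hu0, normParent_of_lt hu0 hu, shiftedLabel] at hpb hb
    cases b
    · simp only [Bool.not_false, decide_eq_true_eq, decide_eq_false_iff_not, Nat.add_sub_cancel,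
        Nat.zero_lt_succ, true_and, Bool.false_eq_true, if_false] at hpb hb ⊢
      -- a state that leaves `1` along an edge moves on to `2`
      have h2 : G.st u c = 2 := by
        rcases G.edge_ok c u hu0 hu with h | ⟨h1, -⟩ | ⟨-, h2⟩
        · exact absurd (h ▸ hpb) hb
        · exact absurd h1 (by simp [hpb])
        · exact h2
      exact ⟨hu, h2, Or.inr (by simp [hpb])⟩
    · simp only [Bool.not_true, decide_eq_true_eq, decide_eq_false_iff_not, Nat.add_sub_cancel,
        Nat.zero_lt_succ, true_and, if_true] at hpb hb ⊢
      exact ⟨hu, hb, Or.inr hpb⟩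

theorem uniqueSwitches_shifted (c : C) :
    UniqueSwitches (G.n + 1) (addRoot (normParent G.n G.parent)) (G.shiftedLabel · c) := by
  intro b i j hi hj hsi hsj
  obtain ⟨u, rfl⟩ : ∃ u, i = u + 1 := ⟨i - 1, by have := hsi.1; omega⟩
  obtain ⟨v, rfl⟩ : ∃ v, j = v + 1 := ⟨j - 1, by have := hsj.1; omega⟩
  rw [((G.isStateRoot_of_isSwitch (by omega) hsi).unique
    (G.isStateRoot_of_isSwitch (by omega) hsj))]

end GCCSolution

def GCCSolution.toWeakPPTree {S C : Type*} {M : S → C → Bool}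
    (G : GCCSolution S C (gccInstance M)) : WeakPPTree S C M where
  n := G.n + 1
  n_pos := Nat.succ_pos _
  parent := addRoot (normParent G.n G.parent)
  parent_zero := addRoot_zero
  parent_lt _ := addRoot_lt fun _ => normParent_lt G.parent_lt
  label := G.shiftedLabel
  root_label _ := by simp [GCCSolution.shiftedLabel]
  unique_switches := G.uniqueSwitches_shifted
  row_node s := by
    obtain ⟨u, hu, hus⟩ := G.species_node s
    exact ⟨u + 1, by omega, fun c => by
      simp [GCCSolution.shiftedLabel, mem_gccInstance.mp (hus c)]⟩

theorem stmt11_general {S C : Type*} (M : S → C → Bool) :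
    Nonempty (PPTree S C M) ↔
    Nonempty (GCCSolution S C (fun c s =>
      {q : Fin 3 | (M s c = true ∧ q = 1) ∨
        (M s c = false ∧ (q = 0 ∨ q = 2))})) :=
  ⟨fun ⟨T⟩ => ⟨T.toWeakPPTree.toGCCSolution⟩, fun ⟨G⟩ => ⟨G.toWeakPPTree.toPPTree⟩⟩

/-- `M` admits a persistent perfect phylogeny iff the General
Character Compatibility instance with `α_c(s) = {1}` when `M s c = 1` and
`α_c(s) = {0,2}` when `M s c = 0` (all character trees `0 → 1 → 2`) admits a
solution. -/
theorem stmt11 {S C : Type*} [Fintype S] [Fintype C] (M : S → C → Bool) :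
    Nonempty (PPTree S C M) ↔
    Nonempty (GCCSolution S C (fun c s =>
      {q : Fin 3 | (M s c = true ∧ q = 1) ∨
        (M s c = false ∧ (q = 0 ∨ q = 2))})) :=
  stmt11_general M
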